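/- Let τ be an n-tuple of permutations in Sₙ with τ₁ = id, and let S, C be real τ-permutative matrices with first rows (s₁,…,sₙ) and (c₁,…,cₙ) satisfying |cᵢ| ≤ sᵢ for all i, and let 0 ≤ γ ≤ 1. Then (1/2)(S + γC) and (1/2)(S − γC) are nonnegative τ-permutative matrices, and the 2n×2n block matrix M_γ with blocks [[ (s_{ij}+γc_{ij})/2, (s_{ij}−γc_{ij})/2 ],[ (s_{ij}−γc_{ij})/2, (s_{ij}+γc_{ij})/2 ]] is a nonnegative permutative matrix whose eigenvalue multiset is σ(S) ∪ γ·σ(C). -/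

import Mathlib

/-!
Writing `P = (S + γC)/2` and `Q = (S - γC)/2`, the entries of `P` and `Q` are `(s ± γ c)/2` read
through `τ`, hence nonnegative because `|γ c| ≤ |c| ≤ s`. The block matrix `M = [[P, Q], [Q, P]]`
is conjugate to `[[P + Q, 0], [Q, P - Q]]` by the unipotent block matrices `[[1, 1], [0, 1]]` and
`[[1, -1], [0, 1]]`, so its characteristic polynomial is `χ(P + Q) χ(P - Q) = χ(S) χ(γC)`, and the
roots of `χ(γC)` are those of `χ(C)` scaled by `γ`. A row `(i, p)` of `M` is the first row
permuted by `τ i` on the block index and by the transposition of `0` and `p` on the block position.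
-/

open Matrix Polynomial

variable {m n ι R : Type*}

lemma abs_mul_le_of_abs_le [Ring R] [LinearOrder R] [IsOrderedRing R] {s c γ : R}
    (h : |c| ≤ s) (h0 : 0 ≤ γ) (h1 : γ ≤ 1) : |γ * c| ≤ s :=
  calc |γ * c| = γ * |c| := by rw [abs_mul, abs_of_nonneg h0]
    _ ≤ 1 * |c| := by gcongr
    _ ≤ s := by rwa [one_mul]

def permutativeMatrix [Semiring R] (τ : m → Equiv.Perm n) : (n → R) →ₗ[R] Matrix m n R where
  toFun a := of fun i j => a (τ i j)
  map_add' _ _ := rfl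
  map_smul' _ _ := rfl

@[simp]
lemma permutativeMatrix_apply [Semiring R] (τ : m → Equiv.Perm n) (a : n → R) (i : m) (j : n) :
    permutativeMatrix τ a i j = a (τ i j) := rfl

def Equiv.prodFinTwoEquivSum (m : Type*) : m × Fin 2 ≃ m ⊕ m :=
  ((Equiv.refl m).prodCongr finTwoEquiv).trans
    ((Equiv.prodComm _ _).trans (Equiv.boolProdEquivSum m))

namespace Matrix

def diagOffDiagBlocks [DecidableEq ι] (P Q : Matrix m n R) : Matrix (m × ι) (n × ι) R :=
  of fun u v => if u.2 = v.2 then P u.1 v.1 else Q u.1 v.1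

@[simp]
lemma diagOffDiagBlocks_apply [DecidableEq ι] (P Q : Matrix m n R) (i : m) (j : n) (p q : ι) :
    diagOffDiagBlocks P Q (i, p) (j, q) = if p = q then P i j else Q i j := rfl

lemma diagOffDiagBlocks_nonneg [Zero R] [LE R] [DecidableEq ι] {P Q : Matrix m n R}
    (hP : ∀ i j, 0 ≤ P i j) (hQ : ∀ i j, 0 ≤ Q i j) (u : m × ι) (v : n × ι) :
    0 ≤ diagOffDiagBlocks P Q u v := by
  rw [diagOffDiagBlocks, of_apply]
  split_ifs
  exacts [hP _ _, hQ _ _]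

lemma diagOffDiagBlocks_permutativeMatrix_row [Semiring R] [DecidableEq ι]
    {τ : m → Equiv.Perm m} {i₀ : m} (hτ : τ i₀ = 1) (a b : m → R) (p₀ : ι) (u : m × ι) :
    ∃ π : Equiv.Perm (m × ι), ∀ v,
      diagOffDiagBlocks (permutativeMatrix τ a) (permutativeMatrix τ b) u v =
        diagOffDiagBlocks (permutativeMatrix τ a) (permutativeMatrix τ b) (i₀, p₀) (π v) := by
  obtain ⟨i, p⟩ := u
  refine ⟨(τ i).prodCongr (Equiv.swap p₀ p), fun ⟨j, q⟩ => ?_⟩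
  simp [hτ, eq_comm (a := p₀), Equiv.swap_apply_eq_iff, eq_comm (a := q)]

lemma reindex_diagOffDiagBlocks (P Q : Matrix m n R) :
    reindex (Equiv.prodFinTwoEquivSum m) (Equiv.prodFinTwoEquivSum n) (diagOffDiagBlocks P Q) =
      fromBlocks P Q Q P := by
  ext (i | i) (j | j) <;> simp [Equiv.prodFinTwoEquivSum]

section CommRing

variable [CommRing R] [Fintype m] [DecidableEq m]

lemma det_fromBlocks_self (P Q : Matrix m m R) :
    (fromBlocks P Q Q P).det = (P + Q).det * (P - Q).det := by
  have h : fromBlocks 1 1 0 1 * fromBlocks P Q Q P * fromBlocks 1 (-1) 0 1 =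
      fromBlocks (P + Q) 0 Q (P - Q) := by
    simp only [fromBlocks_multiply]
    congr 1 <;> noncomm_ring
  simpa [det_fromBlocks_zero₂₁, det_fromBlocks_zero₁₂] using congrArg det h

lemma charpoly_fromBlocks_self (P Q : Matrix m m R) :
    (fromBlocks P Q Q P).charpoly = (P + Q).charpoly * (P - Q).charpoly := by
  rw [charpoly, charmatrix_fromBlocks, det_fromBlocks_self, charpoly, charpoly]
  congr 2 <;> ext i j <;> simp [charmatrix_apply] <;> ring

lemma charpoly_diagOffDiagBlocks (P Q : Matrix m m R) :
    (diagOffDiagBlocks P Q : Matrix (m × Fin 2) (m × Fin 2) R).charpoly =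
      (P + Q).charpoly * (P - Q).charpoly := by
  rw [← charpoly_reindex (Equiv.prodFinTwoEquivSum m), reindex_diagOffDiagBlocks,
    charpoly_fromBlocks_self]

end CommRing

section Field

variable {K : Type*} [Field K] [Fintype m] [DecidableEq m]

lemma charpoly_smul [Infinite K] (r : K) (A : Matrix m m K) :
    (r • A).charpoly = A.charpoly.scaleRoots r := by
  rcases eq_or_ne r 0 with rfl | hr
  · simp [A.charpoly_monic.leadingCoeff, charpoly_natDegree_eq_dim]
  refine Polynomial.funext fun x => ?_
  obtain ⟨y, rfl⟩ : ∃ y, x = r * y := ⟨r⁻¹ * x, by field_simp⟩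
  rw [scaleRoots_eval_mul, eval_charpoly, eval_charpoly, charpoly_natDegree_eq_dim, ← det_smul,
    smul_sub]
  congr 2
  ext i j
  simp [diagonal_apply]

lemma roots_charpoly_smul [IsAlgClosed K] (r : K) (A : Matrix m m K) :
    (r • A).charpoly.roots = A.charpoly.roots.map (r * ·) := by
  rcases eq_or_ne r 0 with rfl | hr
  · simp [IsAlgClosed.card_roots_eq_natDegree, charpoly_natDegree_eq_dim,
      Multiset.nsmul_singleton]
  · rw [charpoly_smul, roots_scaleRoots _ hr.isUnit]

end Field

end Matrix

/-- for τ-permutative S, C with |cᵢ| ≤ sᵢ and 0 ≤ γ ≤ 1, the matrices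
(1/2)(S±γC) are nonnegative and τ-permutative, and the 2n×2n block matrix M_γ is a
nonnegative permutative matrix with eigenvalue multiset σ(S) ∪ γ·σ(C). -/
theorem stmt9 (n : ℕ) (hn : 0 < n) (τ : Fin n → Equiv.Perm (Fin n))
    (hτ : τ ⟨0, hn⟩ = 1) (s c : Fin n → ℝ)
    (S C : Matrix (Fin n) (Fin n) ℝ)
    (hS : ∀ i j, S i j = s (τ i j)) (hC : ∀ i j, C i j = c (τ i j))
    (h : ∀ i, |c i| ≤ s i) (γ : ℝ) (h0 : 0 ≤ γ) (h1 : γ ≤ 1)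
    (M : Matrix (Fin n × Fin 2) (Fin n × Fin 2) ℝ)
    (hM : ∀ (i j : Fin n) (p q : Fin 2), M (i, p) (j, q) =
      if p = q then (S i j + γ * C i j) / 2 else (S i j - γ * C i j) / 2) :
    (∀ i j, 0 ≤ ((1 / 2 : ℝ) • (S + γ • C)) i j) ∧
    (∀ i j, 0 ≤ ((1 / 2 : ℝ) • (S - γ • C)) i j) ∧
    (∃ a : Fin n → ℝ, ∀ i j, ((1 / 2 : ℝ) • (S + γ • C)) i j = a (τ i j)) ∧
    (∃ a : Fin n → ℝ, ∀ i j, ((1 / 2 : ℝ) • (S - γ • C)) i j = a (τ i j)) ∧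
    (∀ u v, 0 ≤ M u v) ∧
    (∀ u : Fin n × Fin 2, ∃ π : Equiv.Perm (Fin n × Fin 2),
      ∀ v, M u v = M (⟨0, hn⟩, 0) (π v)) ∧
    (M.map Complex.ofReal).charpoly.roots =
      (S.map Complex.ofReal).charpoly.roots +
        Multiset.map (fun z => (γ : ℂ) * z)
          ((C.map Complex.ofReal).charpoly.roots) := by
  obtain rfl : S = permutativeMatrix τ s := Matrix.ext hS
  obtain rfl : C = permutativeMatrix τ c := Matrix.ext hC
  set a : Fin n → ℝ := fun k => (s k + γ * c k) / 2
  set b : Fin n → ℝ := fun k => (s k - γ * c k) / 2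
  have hP : (1 / 2 : ℝ) • (permutativeMatrix τ s + γ • permutativeMatrix τ c) =
      permutativeMatrix τ a :=
    Matrix.ext fun _ _ => one_div_mul_eq_div _ _
  have hQ : (1 / 2 : ℝ) • (permutativeMatrix τ s - γ • permutativeMatrix τ c) =
      permutativeMatrix τ b :=
    Matrix.ext fun _ _ => one_div_mul_eq_div _ _
  have hab (k : Fin n) : 0 ≤ a k ∧ 0 ≤ b k := by
    have := abs_le.mp (abs_mul_le_of_abs_le (h k) h0 h1)
    constructor <;> dsimp only [a, b] <;> linarith
  obtain rfl : M = diagOffDiagBlocks (permutativeMatrix τ a) (permutativeMatrix τ b) := by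
    ext ⟨i, p⟩ ⟨j, q⟩
    simp [hM, a, b]
  rw [hP, hQ]
  refine ⟨fun _ _ => (hab _).1, fun _ _ => (hab _).2, ⟨a, fun _ _ => rfl⟩, ⟨b, fun _ _ => rfl⟩,
    diagOffDiagBlocks_nonneg (fun _ _ => (hab _).1) (fun _ _ => (hab _).2),
    diagOffDiagBlocks_permutativeMatrix_row hτ a b 0, ?_⟩
  have hsum : permutativeMatrix τ a + permutativeMatrix τ b = permutativeMatrix τ s := by
    rw [← hP, ← hQ]; module
  have hdiff : permutativeMatrix τ a - permutativeMatrix τ b = γ • permutativeMatrix τ c := by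
    rw [← hP, ← hQ]; module
  have hχ {k : Type} [Fintype k] [DecidableEq k] (A : Matrix k k ℝ) :
      (A.map Complex.ofReal).charpoly = A.charpoly.map Complex.ofRealHom :=
    charpoly_map A Complex.ofRealHom
  rw [hχ, charpoly_diagOffDiagBlocks, hsum, hdiff, Polynomial.map_mul, ← hχ, ← hχ,
    map_smul' _ _ _ Complex.ofReal_mul,
    roots_mul ((charpoly_monic _).mul (charpoly_monic _)).ne_zero, roots_charpoly_smul]
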